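/- arXiv:2401.07106 — 2 statements merged into one kernel-verified Lean document; each statement's English description precedes it below -/
import Mathlib

section
/- There is a strictly increasing (under strict ideal inclusion) chain of ideals over the alphabet Σ_ℓ = {a₀, …, a_ℓ}, given by reduced ideal representations of length at most 2ℓ+1, whose length is at least 2^ℓ. Consequently, any weight function on reduced ideal representations of length ≤ 2ℓ+1 over Σ_ℓ that is strictly monotone with respect to strict ideal inclusion must attain at least 2^ℓ distinct values. -/
def IsDirectedLang {A : Type*} (L : Set (List A)) : Prop :=
  ∀ u ∈ L, ∀ v ∈ L, ∃ w ∈ L, u.Sublist w ∧ v.Sublist w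

def dcl {A : Type*} (L : Set (List A)) : Set (List A) := {u | ∃ v ∈ L, u.Sublist v}

def DownwardClosed {A : Type*} (D : Set (List A)) : Prop :=
  ∀ u v : List A, u.Sublist v → v ∈ D → u ∈ D

def IsIdeal {A : Type*} (I : Set (List A)) : Prop :=
  I.Nonempty ∧ DownwardClosed I ∧ IsDirectedLang I

inductive Atom (A : Type*) where
  | single : A → Atom A
  | alph : Finset A → Atom A

def Atom.lang {A : Type*} : Atom A → Set (List A)
  | .single a => {[], [a]}
  | .alph d => {w | ∀ c ∈ w, c ∈ d}

def Atom.Valid {A : Type*} : Atom A → Prop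
  | .single _ => True
  | .alph d => d.Nonempty

def conc {A : Type*} (L M : Set (List A)) : Set (List A) :=
  {w | ∃ u ∈ L, ∃ v ∈ M, w = u ++ v}

def Idl {A : Type*} : List (Atom A) → Set (List A)
  | [] => {[]}
  | α :: r => conc α.lang (Idl r)

def LeftAbsorbs {A : Type*} (α β : Atom A) : Prop := Idl [α, β] = Idl [α]
def RightAbsorbs {A : Type*} (α β : Atom A) : Prop := Idl [α, β] = Idl [β]
def Absorptive {A : Type*} (α β : Atom A) : Prop := LeftAbsorbs α β ∨ RightAbsorbs α β
def Reduced {A : Type*} (r : List (Atom A)) : Prop := r.Chain' fun α β => ¬ Absorptive α β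

def atomWeight {A : Type*} (k : ℕ) : Atom A → ℕ
  | .single _ => 1
  | .alph d => (k+1) ^ d.card

def repWeight {A : Type*} (k : ℕ) (r : List (Atom A)) : ℕ := (r.map (atomWeight k)).sum


/-!
The chain doubles at each step: `C_{i+1}` is `C_i` followed by `Σ_i*·a_{i+1}°·I` for each `I` in
`C_i`. Every ideal of `C_i` only uses the letters `a₀, …, a_i`, so it lies below every ideal of the
second half, and since `a_{i+1} ∉ Σ_i` a word `a_{i+1} w` lies in `Σ_i*·a_{i+1}°·I` exactly when
`w ∈ I`; hence prefixing by `Σ_i*·a_{i+1}°` preserves strict inclusion. Adjacent atoms are never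
absorptive because one-letter words separate their languages. A weight that is strictly monotone
along a chain of `2^ℓ` ideals is injective on it.
-/

variable {A : Type*}

namespace Atom

@[simp]
lemma nil_mem_lang (α : Atom A) : [] ∈ α.lang := by
  cases α with
  | single a => exact Or.inl rfl
  | alph d => exact fun _ h => absurd h List.not_mem_nil

@[simp]
lemma singleton_mem_lang_single {a c : A} : [c] ∈ (single a).lang ↔ c = a := by
  simp [lang]

@[simp]
lemma singleton_mem_lang_alph {s : Finset A} {c : A} : [c] ∈ (alph s).lang ↔ c ∈ s := by
  simp [lang]

lemma Valid.exists_singleton_mem_lang {α : Atom A} (h : α.Valid) : ∃ c, [c] ∈ α.lang := by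
  cases α with
  | single a => exact ⟨a, by simp⟩
  | alph d => exact h.imp fun c hc => by simpa using hc

end Atom

open Atom

lemma nil_mem_Idl (r : List (Atom A)) : [] ∈ Idl r := by
  induction r with
  | nil => rfl
  | cons α r ih => exact ⟨[], nil_mem_lang α, [], ih, rfl⟩

@[simp]
lemma Idl_singleton (α : Atom A) : Idl [α] = α.lang := by
  ext w
  constructor
  · rintro ⟨u, hu, v, rfl, rfl⟩
    simpa using hu
  · exact fun hw => ⟨w, hw, [], rfl, (List.append_nil w).symm⟩

lemma Idl_cons_mono (α : Atom A) {r r' : List (Atom A)} (h : Idl r ⊆ Idl r') :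
    Idl (α :: r) ⊆ Idl (α :: r') := by
  rintro _ ⟨u, hu, v, hv, rfl⟩
  exact ⟨u, hu, v, h hv, rfl⟩

lemma lang_subset_Idl {α : Atom A} {r : List (Atom A)} (h : α ∈ r) : α.lang ⊆ Idl r := by
  induction r with
  | nil => cases h
  | cons β r ih =>
    intro w hw
    rcases List.mem_cons.1 h with rfl | h
    · exact ⟨w, hw, [], nil_mem_Idl r, (List.append_nil w).symm⟩
    · exact ⟨[], nil_mem_lang β, w, ih h hw, rfl⟩

lemma letters_of_mem_Idl {P : A → Prop} {r : List (Atom A)}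
    (h : ∀ α ∈ r, ∀ w ∈ α.lang, ∀ c ∈ w, P c) : ∀ w ∈ Idl r, ∀ c ∈ w, P c := by
  induction r with
  | nil => rintro w rfl c hc; cases hc
  | cons α r ih =>
    rintro _ ⟨u, hu, v, hv, rfl⟩ c hc
    rcases List.mem_append.1 hc with hc | hc
    · exact h α List.mem_cons_self u hu c hc
    · exact ih (fun β hβ => h β (List.mem_cons_of_mem α hβ)) v hv c hc

section Absorption

variable {α β : Atom A}

lemma Absorptive.lang_subset (h : Absorptive α β) : β.lang ⊆ α.lang ∨ α.lang ⊆ β.lang := by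
  rcases h with h | h
  · left
    rw [← Idl_singleton α, ← h]
    exact lang_subset_Idl (by simp)
  · right
    rw [← Idl_singleton β, ← h]
    exact lang_subset_Idl (by simp)

lemma not_absorptive_of_not_subset (h₁ : ¬ α.lang ⊆ β.lang) (h₂ : ¬ β.lang ⊆ α.lang) :
    ¬ Absorptive α β := fun h => h.lang_subset.elim h₂ h₁

variable {c : A}

lemma not_lang_subset_lang_single (hβ : β.Valid) (hc : ∀ w ∈ β.lang, c ∉ w) :
    ¬ β.lang ⊆ (single c).lang := by
  obtain ⟨d, hd⟩ := hβ.exists_singleton_mem_lang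
  intro h
  have hdc : d = c := by simpa using h hd
  exact hc [d] hd (by simp [hdc])

lemma not_lang_single_subset_lang (hc : ∀ w ∈ β.lang, c ∉ w) : ¬ (single c).lang ⊆ β.lang :=
  fun h => hc [c] (h (by simp)) (List.mem_singleton_self c)

lemma not_absorptive_single_left (hβ : β.Valid) (hc : ∀ w ∈ β.lang, c ∉ w) :
    ¬ Absorptive (single c) β :=
  not_absorptive_of_not_subset (not_lang_single_subset_lang hc) (not_lang_subset_lang_single hβ hc)

lemma not_absorptive_single_right (hβ : β.Valid) (hc : ∀ w ∈ β.lang, c ∉ w) :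
    ¬ Absorptive β (single c) :=
  not_absorptive_of_not_subset (not_lang_subset_lang_single hβ hc) (not_lang_single_subset_lang hc)

end Absorption

section Prefix

variable {s : Finset A} {c : A} {r r' : List (Atom A)}

lemma singleton_mem_Idl_alph_single : [c] ∈ Idl (alph s :: single c :: r) :=
  ⟨[], nil_mem_lang _, [c], ⟨[c], by simp, [], nil_mem_Idl r, rfl⟩, rfl⟩

lemma Idl_subset_Idl_alph_single (h : ∀ w ∈ Idl r, ∀ d ∈ w, d ∈ s) :
    Idl r ⊆ Idl (alph s :: single c :: r') :=
  fun w hw => ⟨w, h w hw, [], ⟨[], nil_mem_lang _, [], nil_mem_Idl r', rfl⟩, by simp⟩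

lemma cons_mem_Idl_alph_single_iff (hc : c ∉ s) (hr : ∀ w ∈ Idl r, c ∉ w) {w : List A} :
    c :: w ∈ Idl (alph s :: single c :: r) ↔ w ∈ Idl r := by
  refine ⟨?_, fun hw => ⟨[], nil_mem_lang _, c :: w, ⟨[c], by simp, w, hw, rfl⟩, rfl⟩⟩
  rintro ⟨u, hu, _, ⟨v, hv, t, ht, rfl⟩, hw⟩
  cases u with
  | cons d u =>
    obtain ⟨hcd, -⟩ := List.cons_eq_cons.1 hw
    exact (hc (hcd ▸ hu d List.mem_cons_self)).elim
  | nil =>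
    rcases hv with rfl | rfl
    · obtain rfl : t = c :: w := by simpa using hw.symm
      exact (hr _ ht List.mem_cons_self).elim
    · obtain ⟨-, rfl⟩ := List.cons_eq_cons.1 hw
      exact ht

lemma Idl_alph_single_ssubset (hc : c ∉ s) (hr' : ∀ w ∈ Idl r', c ∉ w) (h : Idl r ⊂ Idl r') :
    Idl (alph s :: single c :: r) ⊂ Idl (alph s :: single c :: r') := by
  have hr : ∀ w ∈ Idl r, c ∉ w := fun w hw => hr' w (h.subset hw)
  obtain ⟨w, hw', hw⟩ := Set.exists_of_ssubset h
  refine (Set.ssubset_iff_of_subset (Idl_cons_mono _ (Idl_cons_mono _ h.subset))).2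
    ⟨c :: w, (cons_mem_Idl_alph_single_iff hc hr').2 hw', fun h' => ?_⟩
  exact hw ((cons_mem_Idl_alph_single_iff hc hr).1 h')

lemma reduced_alph_single (hs : s.Nonempty) (hc : c ∉ s) (hv : ∀ β ∈ r, β.Valid)
    (hr : ∀ w ∈ Idl r, c ∉ w) (h : Reduced r) : Reduced (alph s :: single c :: r) := by
  have hsc : ∀ w ∈ (alph s).lang, c ∉ w := fun w hw hcw => hc (hw c hcw)
  refine List.isChain_cons_cons.2 ⟨not_absorptive_single_right hs hsc, ?_⟩
  cases r with
  | nil => exact List.isChain_singleton _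
  | cons β r =>
    refine List.isChain_cons_cons.2 ⟨not_absorptive_single_left (hv β List.mem_cons_self) ?_, h⟩
    exact fun w hw => hr w (lang_subset_Idl List.mem_cons_self hw)

end Prefix

namespace ExponentialChain

variable {ℓ i j m n : ℕ}

/-- The letter `a_j`; it wraps around modulo `ℓ + 1` for `j > ℓ`. -/
def letter (ℓ j : ℕ) : Fin (ℓ + 1) := Fin.ofNat (ℓ + 1) j

/-- The alphabet `Σ_i = {a₀, …, a_i}`. -/
def sigma (ℓ i : ℕ) : Finset (Fin (ℓ + 1)) := {c | c.val ≤ i}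

/-- `chainRep ℓ i n` is the `n`-th member of `C_i` (for `n < 2^i`): the members of `C_{i+1}`
with index `n ≥ 2^i` are the prefixed copies `Σ_i*·a_{i+1}°·I` of the `(n - 2^i)`-th member
of `C_i`. -/
def chainRep (ℓ : ℕ) : ℕ → ℕ → List (Atom (Fin (ℓ + 1)))
  | 0, _ => [single (letter ℓ 0)]
  | i + 1, n =>
    if n < 2 ^ i then chainRep ℓ i n
    else alph (sigma ℓ i) :: single (letter ℓ (i + 1)) :: chainRep ℓ i (n - 2 ^ i)

lemma val_letter_le : (letter ℓ j).val ≤ j := Nat.mod_le _ _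

lemma val_letter (h : j ≤ ℓ) : (letter ℓ j).val = j := Nat.mod_eq_of_lt (by omega)

@[simp]
lemma mem_sigma {c : Fin (ℓ + 1)} : c ∈ sigma ℓ i ↔ c.val ≤ i := by simp [sigma]

lemma sigma_nonempty : (sigma ℓ i).Nonempty := ⟨0, by simp⟩

lemma letter_succ_not_mem_sigma (h : i + 1 ≤ ℓ) : letter ℓ (i + 1) ∉ sigma ℓ i := by
  simp [val_letter h]

lemma chainRep_of_lt (h : n < 2 ^ i) : chainRep ℓ (i + 1) n = chainRep ℓ i n := by
  rw [chainRep, if_pos h]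

lemma chainRep_of_le (h : 2 ^ i ≤ n) :
    chainRep ℓ (i + 1) n =
      alph (sigma ℓ i) :: single (letter ℓ (i + 1)) :: chainRep ℓ i (n - 2 ^ i) := by
  rw [chainRep, if_neg (by omega)]

lemma chainRep_valid : ∀ α ∈ chainRep ℓ i n, α.Valid := by
  induction i generalizing n with
  | zero => simp [chainRep, Valid]
  | succ i ih =>
    by_cases h : n < 2 ^ i
    · rw [chainRep_of_lt h]; exact ih
    · rw [chainRep_of_le (not_lt.1 h)]
      simpa [Valid, sigma_nonempty] using ih

lemma length_chainRep_le : (chainRep ℓ i n).length ≤ 2 * i + 1 := by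
  induction i generalizing n with
  | zero => simp [chainRep]
  | succ i ih =>
    by_cases h : n < 2 ^ i
    · rw [chainRep_of_lt h]; exact ih.trans (by omega)
    · rw [chainRep_of_le (not_lt.1 h), List.length_cons, List.length_cons]
      have := @ih (n - 2 ^ i)
      omega

lemma letters_chainRep : ∀ α ∈ chainRep ℓ i n, ∀ w ∈ α.lang, ∀ c ∈ w, c.val ≤ i := by
  induction i generalizing n with
  | zero =>
    simp only [chainRep, List.mem_singleton, forall_eq]
    rintro w (rfl | rfl) c hc
    · cases hc
    · simp only [List.mem_singleton] at hc
      exact hc ▸ val_letter_le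
  | succ i ih =>
    by_cases h : n < 2 ^ i
    · rw [chainRep_of_lt h]
      exact fun α hα w hw c hc => (ih α hα w hw c hc).trans (Nat.le_succ i)
    · rw [chainRep_of_le (not_lt.1 h)]
      rintro α (_ | ⟨_, _ | ⟨_, hα⟩⟩) w hw c hc
      · exact (mem_sigma.1 (hw c hc)).trans (Nat.le_succ i)
      · rcases hw with rfl | rfl
        · cases hc
        · exact (List.mem_singleton.1 hc) ▸ val_letter_le
      · exact (ih α hα w hw c hc).trans (Nat.le_succ i)

lemma letters_Idl_chainRep : ∀ w ∈ Idl (chainRep ℓ i n), ∀ c ∈ w, c.val ≤ i :=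
  letters_of_mem_Idl letters_chainRep

lemma letter_succ_not_mem_Idl_chainRep (h : i + 1 ≤ ℓ) :
    ∀ w ∈ Idl (chainRep ℓ i n), letter ℓ (i + 1) ∉ w := fun w hw hc => by
  have := letters_Idl_chainRep w hw _ hc
  rw [val_letter h] at this
  omega

lemma chainRep_reduced (hi : i ≤ ℓ) : Reduced (chainRep ℓ i n) := by
  induction i generalizing n with
  | zero => exact List.isChain_singleton _
  | succ i ih =>
    by_cases h : n < 2 ^ i
    · rw [chainRep_of_lt h]; exact ih (by omega)
    · rw [chainRep_of_le (not_lt.1 h)]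
      exact reduced_alph_single sigma_nonempty (letter_succ_not_mem_sigma hi) chainRep_valid
        (letter_succ_not_mem_Idl_chainRep hi) (ih (by omega))

lemma Idl_chainRep_ssubset (hi : i ≤ ℓ) (hmn : m < n) (hn : n < 2 ^ i) :
    Idl (chainRep ℓ i m) ⊂ Idl (chainRep ℓ i n) := by
  induction i generalizing m n with
  | zero => omega
  | succ i ih =>
    by_cases hn' : n < 2 ^ i
    · rw [chainRep_of_lt hn', chainRep_of_lt (hmn.trans hn')]
      exact ih (by omega) hmn hn'
    rw [chainRep_of_le (not_lt.1 hn')]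
    by_cases hm : m < 2 ^ i
    · rw [chainRep_of_lt hm]
      refine (Set.ssubset_iff_of_subset (Idl_subset_Idl_alph_single ?_)).2
        ⟨_, singleton_mem_Idl_alph_single, fun h => ?_⟩
      · exact fun w hw c hc => mem_sigma.2 (letters_Idl_chainRep w hw c hc)
      · exact letter_succ_not_mem_Idl_chainRep hi _ h (List.mem_singleton_self _)
    · rw [chainRep_of_le (not_lt.1 hm)]
      exact Idl_alph_single_ssubset (letter_succ_not_mem_sigma hi)
        (letter_succ_not_mem_Idl_chainRep hi) (ih (by omega) (by omega) (by rw [pow_succ] at hn; omega))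

end ExponentialChain

open ExponentialChain

theorem exponential_chain (ℓ : ℕ) :
    ∃ C : Fin (2 ^ ℓ) → List (Atom (Fin (ℓ + 1))),
      (∀ i, (∀ α ∈ C i, α.Valid) ∧ Reduced (C i) ∧ (C i).length ≤ 2 * ℓ + 1) ∧
      (∀ i j, i < j → Idl (C i) ⊂ Idl (C j)) ∧
      (∀ μ : List (Atom (Fin (ℓ + 1))) → ℕ,
        (∀ r s : List (Atom (Fin (ℓ + 1))),
          (∀ α ∈ r, α.Valid) → (∀ α ∈ s, α.Valid) →
          Reduced r → Reduced s →
          r.length ≤ 2 * ℓ + 1 → s.length ≤ 2 * ℓ + 1 →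
          Idl r ⊂ Idl s → μ r < μ s) →
        2 ^ ℓ ≤ (Set.range fun i : Fin (2 ^ ℓ) => μ (C i)).ncard) := by
  have hC (i : Fin (2 ^ ℓ)) : (∀ α ∈ chainRep ℓ ℓ i, α.Valid) ∧ Reduced (chainRep ℓ ℓ i) ∧
      (chainRep ℓ ℓ i).length ≤ 2 * ℓ + 1 :=
    ⟨chainRep_valid, chainRep_reduced le_rfl, length_chainRep_le⟩
  have hlt (i j : Fin (2 ^ ℓ)) (hij : i < j) : Idl (chainRep ℓ ℓ i) ⊂ Idl (chainRep ℓ ℓ j) :=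
    Idl_chainRep_ssubset le_rfl hij j.isLt
  refine ⟨fun i => chainRep ℓ ℓ i, hC, hlt, fun μ hμ => ?_⟩
  have hmono : StrictMono fun i : Fin (2 ^ ℓ) => μ (chainRep ℓ ℓ i) := fun i j hij =>
    hμ _ _ (hC i).1 (hC j).1 (hC i).2.1 (hC j).2.1 (hC i).2.2 (hC j).2.2 (hlt i j hij)
  rw [Set.ncard_range_of_injective hmono.injective, Nat.card_eq_fintype_card, Fintype.card_fin]
end

section
/- Two reduced ideal representations over Σ represent the same ideal if and only if they are syntactically identical (equal as sequences of atoms). -/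
section Helpers

variable {A : Type*}

lemma mem_alph_lang {Δ : Finset A} {w : List A} :
    w ∈ (Atom.alph Δ).lang ↔ ∀ c ∈ w, c ∈ Δ := Iff.rfl

lemma mem_single_lang {a : A} {w : List A} :
    w ∈ (Atom.single a).lang ↔ w = [] ∨ w = [a] := by
  simp [Atom.lang]

lemma mem_idl_cons {α : Atom A} {r : List (Atom A)} {w : List A} :
    w ∈ Idl (α :: r) ↔ ∃ u ∈ α.lang, ∃ v ∈ Idl r, w = u ++ v := Iff.rfl

lemma nil_mem_lang (α : Atom A) : ([] : List A) ∈ α.lang := by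
  cases α with
  | single a => exact mem_single_lang.mpr (Or.inl rfl)
  | alph d => exact fun c hc => by simp at hc

lemma nil_mem_idl (r : List (Atom A)) : ([] : List A) ∈ Idl r := by
  induction r with
  | nil => rfl
  | cons α r ih => exact ⟨[], nil_mem_lang α, [], ih, rfl⟩

lemma idl_subset_cons (α : Atom A) (r : List (Atom A)) : Idl r ⊆ Idl (α :: r) :=
  fun w hw => ⟨[], nil_mem_lang α, w, hw, rfl⟩

lemma lang_dcl (α : Atom A) : DownwardClosed α.lang := by
  intro u v huv hv
  cases α with
  | single a =>
    rcases mem_single_lang.mp hv with rfl | rfl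
    · rw [List.sublist_nil] at huv
      exact mem_single_lang.mpr (Or.inl huv)
    · exact mem_single_lang.mpr (List.sublist_singleton.mp huv)
  | alph d => exact fun c hc => hv c (huv.subset hc)

lemma idl_dcl (r : List (Atom A)) : DownwardClosed (Idl r) := by
  induction r with
  | nil =>
    intro u v huv hv
    have : v = [] := hv
    subst this
    rw [List.sublist_nil] at huv
    exact huv ▸ rfl
  | cons α r ih =>
    intro u v huv hv
    obtain ⟨p, hp, q, hq, rfl⟩ := hv
    rw [List.sublist_append_iff] at huv
    obtain ⟨u₁, u₂, rfl, h1, h2⟩ := huv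
    exact ⟨u₁, lang_dcl α _ _ h1 hp, u₂, ih _ _ h2 hq, rfl⟩

lemma exists_ne_nil {α : Atom A} (h : α.Valid) : ∃ w ∈ α.lang, w ≠ [] := by
  cases α with
  | single a => exact ⟨[a], mem_single_lang.mpr (Or.inr rfl), by simp⟩
  | alph d =>
    obtain ⟨c, hc⟩ := h
    exact ⟨[c], mem_alph_lang.mpr (by simpa using hc), by simp⟩

lemma atom_eq_of_lang_eq {α β : Atom A} (hα : α.Valid) (hβ : β.Valid)
    (h : α.lang = β.lang) : α = β := by
  cases α with
  | single a =>
    cases β with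
    | single b =>
      have : [a] ∈ (Atom.single b).lang := h ▸ mem_single_lang.mpr (Or.inr rfl)
      rcases mem_single_lang.mp this with h' | h' <;> simp_all
    | alph d =>
      obtain ⟨c, hc⟩ := hβ
      have h1 : [c, c] ∈ (Atom.alph d).lang :=
        mem_alph_lang.mpr (by intro x hx; simp at hx; subst hx; exact hc)
      have h2 : [c, c] ∈ (Atom.single a).lang := by rw [h]; exact h1
      rcases mem_single_lang.mp h2 with h' | h' <;> simp_all
  | alph d =>
    cases β with
    | single b =>
      obtain ⟨c, hc⟩ := hα
      have h1 : [c, c] ∈ (Atom.alph d).lang :=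
        mem_alph_lang.mpr (by intro x hx; simp at hx; subst hx; exact hc)
      have h2 : [c, c] ∈ (Atom.single b).lang := by rw [← h]; exact h1
      rcases mem_single_lang.mp h2 with h' | h' <;> simp_all
    | alph e =>
      have key : ∀ c, c ∈ d ↔ c ∈ e := by
        intro c
        constructor
        · intro hc
          have h1 : [c] ∈ (Atom.alph d).lang :=
            mem_alph_lang.mpr (by intro x hx; simp at hx; subst hx; exact hc)
          have h2 : [c] ∈ (Atom.alph e).lang := by rw [← h]; exact h1
          exact mem_alph_lang.mp h2 c (by simp)
        · intro hc
          have h1 : [c] ∈ (Atom.alph e).lang :=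
            mem_alph_lang.mpr (by intro x hx; simp at hx; subst hx; exact hc)
          have h2 : [c] ∈ (Atom.alph d).lang := by rw [h]; exact h1
          exact mem_alph_lang.mp h2 c (by simp)
      congr 1
      ext c
      exact key c

lemma alph_prefix_nil {Γ : Finset A} {p q t : List A} {c : A}
    (hp : p ∈ (Atom.alph Γ).lang) (hc : c ∉ Γ) (he : p ++ q = c :: t) : p = [] := by
  cases p with
  | nil => rfl
  | cons x xs =>
    rw [List.cons_append, List.cons.injEq] at he
    exact absurd (he.1 ▸ mem_alph_lang.mp hp x (by simp)) hc

lemma idl_pair {α β : Atom A} {w : List A} :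
    w ∈ Idl [α, β] ↔ ∃ u ∈ α.lang, ∃ v ∈ β.lang, w = u ++ v := by
  constructor
  · rintro ⟨u, hu, v, ⟨v₁, hv₁, v₂, hv₂, rfl⟩, rfl⟩
    have : v₂ = [] := hv₂
    subst this
    exact ⟨u, hu, v₁, hv₁, by simp⟩
  · rintro ⟨u, hu, v, hv, rfl⟩
    exact ⟨u, hu, v, ⟨v, hv, [], rfl, by simp⟩, rfl⟩

lemma idl_singleton {α : Atom A} {w : List A} : w ∈ Idl [α] ↔ w ∈ α.lang := by
  constructor
  · rintro ⟨u, hu, v, hv, rfl⟩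
    have : v = [] := hv
    subst this
    simpa using hu
  · intro hw
    exact ⟨w, hw, [], rfl, by simp⟩

lemma leftAbsorbs_alph {Δ : Finset A} {β : Atom A}
    (hβ : β.lang ⊆ (Atom.alph Δ).lang) : LeftAbsorbs (Atom.alph Δ) β := by
  apply Set.eq_of_subset_of_subset
  · intro w hw
    obtain ⟨u, hu, v, hv, rfl⟩ := idl_pair.mp hw
    refine idl_singleton.mpr (mem_alph_lang.mpr ?_)
    intro c hc
    rcases List.mem_append.mp hc with h | h
    · exact mem_alph_lang.mp hu c h
    · exact mem_alph_lang.mp (hβ hv) c h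
  · intro w hw
    exact idl_pair.mpr ⟨w, idl_singleton.mp hw, [], nil_mem_lang β, by simp⟩

lemma rightAbsorbs_alph {Γ : Finset A} {β : Atom A}
    (hβ : β.lang ⊆ (Atom.alph Γ).lang) : RightAbsorbs β (Atom.alph Γ) := by
  apply Set.eq_of_subset_of_subset
  · intro w hw
    obtain ⟨u, hu, v, hv, rfl⟩ := idl_pair.mp hw
    refine idl_singleton.mpr (mem_alph_lang.mpr ?_)
    intro c hc
    rcases List.mem_append.mp hc with h | h
    · exact mem_alph_lang.mp (hβ hu) c h
    · exact mem_alph_lang.mp hv c h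
  · intro w hw
    exact idl_pair.mpr ⟨[], nil_mem_lang β, w, idl_singleton.mp hw, by simp⟩

/-- Skip lemma: if the head of the left rep can't fit in the head of the right rep,
the whole left ideal fits into the tail of the right rep. -/
lemma skip_lemma {e f : Atom A} {P Q : List (Atom A)} (he : e.Valid)
    (h : Idl (e :: P) ⊆ Idl (f :: Q)) (hne : ¬ e.lang ⊆ f.lang) :
    Idl (e :: P) ⊆ Idl Q := by
  intro w hw
  obtain ⟨u, hu, v, hv, rfl⟩ := hw
  cases e with
  | single a =>
    have ha : [a] ∉ f.lang := by
      intro hmem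
      apply hne
      intro x hx
      rcases mem_single_lang.mp hx with rfl | rfl
      · exact nil_mem_lang f
      · exact hmem
    have hwle : (u ++ v).Sublist ([a] ++ v) := by
      rcases mem_single_lang.mp hu with rfl | rfl
      · exact (List.nil_append v) ▸ List.sublist_cons_self a v
      · exact List.Sublist.refl _
    have hmem : [a] ++ v ∈ Idl (Atom.single a :: P) :=
      ⟨[a], mem_single_lang.mpr (Or.inr rfl), v, hv, rfl⟩
    obtain ⟨p, hp, q, hq, heq⟩ := h hmem
    cases f with
    | single b =>
      rcases mem_single_lang.mp hp with rfl | rfl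
      · rw [List.nil_append] at heq
        exact idl_dcl Q _ _ (heq ▸ hwle) hq
      · rw [List.singleton_append, List.singleton_append, List.cons.injEq] at heq
        exact absurd (mem_single_lang.mpr (Or.inr (by rw [heq.1]))) ha
    | alph Γ =>
      have hc : a ∉ Γ := fun h' => ha (mem_alph_lang.mpr (by simpa using h'))
      have hp0 : p = [] := alph_prefix_nil hp hc heq.symm
      subst hp0
      rw [List.nil_append] at heq
      exact idl_dcl Q _ _ (heq ▸ hwle) hq
  | alph Δ =>
    cases f with
    | single b =>
      obtain ⟨d, hd⟩ := he
      have hmem : (d :: d :: u) ++ v ∈ Idl (Atom.alph Δ :: P) := by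
        refine ⟨d :: d :: u, mem_alph_lang.mpr ?_, v, hv, rfl⟩
        intro x hx
        rcases List.mem_cons.mp hx with rfl | hx
        · exact hd
        rcases List.mem_cons.mp hx with rfl | hx
        · exact hd
        · exact mem_alph_lang.mp hu x hx
      obtain ⟨p, hp, q, hq, heq⟩ := h hmem
      have hsub : (u ++ v).Sublist q := by
        rcases mem_single_lang.mp hp with rfl | rfl
        · rw [List.nil_append] at heq
          rw [← heq]
          exact ((List.sublist_cons_self d (u ++ v)).trans
            (List.sublist_cons_self d (d :: (u ++ v))))
        · rw [List.cons_append, List.cons_append, List.singleton_append, List.cons.injEq] at heq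
          rw [← heq.2]
          exact List.sublist_cons_self d (u ++ v)
      exact idl_dcl Q _ _ hsub hq
    | alph Γ =>
      have hcex : ∃ c ∈ Δ, c ∉ Γ := by
        by_contra h'
        push_neg at h'
        exact hne fun x hx => mem_alph_lang.mpr fun c hc => h' c (mem_alph_lang.mp hx c hc)
      obtain ⟨c, hcΔ, hcΓ⟩ := hcex
      have hmem : (c :: u) ++ v ∈ Idl (Atom.alph Δ :: P) := by
        refine ⟨c :: u, mem_alph_lang.mpr ?_, v, hv, rfl⟩
        intro x hx
        rcases List.mem_cons.mp hx with rfl | hx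
        · exact hcΔ
        · exact mem_alph_lang.mp hu x hx
      obtain ⟨p, hp, q, hq, heq⟩ := h hmem
      have hp0 : p = [] := alph_prefix_nil hp hcΓ heq.symm
      subst hp0
      rw [List.nil_append] at heq
      exact idl_dcl Q _ _ (heq ▸ List.sublist_cons_self c (u ++ v)) hq

lemma cancel_single {a : A} {P Q : List (Atom A)}
    (h : Idl (Atom.single a :: P) ⊆ Idl (Atom.single a :: Q)) : Idl P ⊆ Idl Q := by
  intro w hw
  obtain ⟨p, hp, q, hq, heq⟩ :=
    h ⟨[a], mem_single_lang.mpr (Or.inr rfl), w, hw, rfl⟩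
  rcases mem_single_lang.mp hp with rfl | rfl
  · rw [List.nil_append] at heq
    exact idl_dcl Q _ _ (heq ▸ List.sublist_cons_self a w) hq
  · rw [List.singleton_append, List.singleton_append, List.cons.injEq] at heq
    exact heq.2 ▸ hq

lemma cancel_alph {Δ : Finset A} {p₁ : Atom A} {P' Q : List (Atom A)}
    (h : Idl (Atom.alph Δ :: p₁ :: P') ⊆ Idl (Atom.alph Δ :: Q))
    (hab : ¬ LeftAbsorbs (Atom.alph Δ) p₁) : Idl (p₁ :: P') ⊆ Idl Q := by
  intro w hw
  obtain ⟨u, hu, v, hv, rfl⟩ := hw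
  cases p₁ with
  | single b =>
    have hb : b ∉ Δ := by
      intro hbΔ
      apply hab
      apply leftAbsorbs_alph
      intro x hx
      rcases mem_single_lang.mp hx with rfl | rfl
      · exact nil_mem_lang _
      · exact mem_alph_lang.mpr (by simpa using hbΔ)
    have hmem : b :: v ∈ Idl (Atom.alph Δ :: Atom.single b :: P') :=
      idl_subset_cons _ _ ⟨[b], mem_single_lang.mpr (Or.inr rfl), v, hv, rfl⟩
    obtain ⟨p, hp, q, hq, heq⟩ := h hmem
    have hp0 : p = [] := alph_prefix_nil hp hb heq.symm
    subst hp0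
    rw [List.nil_append] at heq
    have hwle : (u ++ v).Sublist (b :: v) := by
      rcases mem_single_lang.mp hu with rfl | rfl
      · exact (List.nil_append v) ▸ List.sublist_cons_self b v
      · exact List.Sublist.refl _
    exact idl_dcl Q _ _ (heq ▸ hwle) hq
  | alph Γ =>
    have hcex : ∃ c ∈ Γ, c ∉ Δ := by
      by_contra h'
      push_neg at h'
      exact hab (leftAbsorbs_alph fun x hx =>
        mem_alph_lang.mpr fun c hc => h' c (mem_alph_lang.mp hx c hc))
    obtain ⟨c, hcΓ, hcΔ⟩ := hcex
    have hmem : (c :: u) ++ v ∈ Idl (Atom.alph Δ :: Atom.alph Γ :: P') := by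
      refine idl_subset_cons _ _ ⟨c :: u, mem_alph_lang.mpr ?_, v, hv, rfl⟩
      intro x hx
      rcases List.mem_cons.mp hx with rfl | hx
      · exact hcΓ
      · exact mem_alph_lang.mp hu x hx
    obtain ⟨p, hp, q, hq, heq⟩ := h hmem
    have hp0 : p = [] := alph_prefix_nil hp hcΔ heq.symm
    subst hp0
    rw [List.nil_append] at heq
    exact idl_dcl Q _ _ (heq ▸ List.sublist_cons_self c (u ++ v)) hq

lemma single_of_lang_subset_single {β : Atom A} {c : A} (hβ : β.Valid)
    (h : β.lang ⊆ (Atom.single c).lang) : β = Atom.single c := by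
  cases β with
  | single a =>
    rcases mem_single_lang.mp (h (mem_single_lang.mpr (Or.inr rfl))) with h' | h' <;>
      simp_all
  | alph Δ =>
    obtain ⟨d, hd⟩ := hβ
    have : [d, d] ∈ (Atom.single c).lang :=
      h (mem_alph_lang.mpr (by intro x hx; simp at hx; subst hx; exact hd))
    rcases mem_single_lang.mp this with h' | h' <;> simp_all

lemma not_cons_subset : ∀ (Q : List (Atom A)) (β : Atom A),
    (∀ α ∈ β :: Q, α.Valid) → Reduced (β :: Q) → ¬ Idl (β :: Q) ⊆ Idl Q := by
  intro Q
  induction Q with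
  | nil =>
    intro β hv _ h
    obtain ⟨w, hw, hne⟩ := exists_ne_nil (hv β (by simp))
    have hmem : w ∈ Idl [β] := idl_singleton.mpr hw
    exact hne (h hmem)
  | cons γ Q' ih =>
    intro β hv hred h
    have hredγ : Reduced (γ :: Q') := hred.tail
    have hnab : ¬ Absorptive β γ := (List.isChain_cons_cons.mp hred).1
    have hvβ : β.Valid := hv β (by simp)
    by_cases hle : β.lang ⊆ γ.lang
    · cases γ with
      | single c =>
        have hβ : β = Atom.single c := single_of_lang_subset_single hvβ hle
        subst hβ
        have h2 := cancel_single h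
        exact ih (Atom.single c) (fun α hα => hv α (List.mem_cons_of_mem _ hα)) hredγ h2
      | alph Γ => exact hnab (Or.inr (rightAbsorbs_alph hle))
    · have h2 : Idl (β :: γ :: Q') ⊆ Idl Q' := skip_lemma hvβ h hle
      have h3 : Idl (γ :: Q') ⊆ Idl Q' := fun w hw => h2 (idl_subset_cons β _ hw)
      exact ih γ (fun α hα => hv α (List.mem_cons_of_mem _ hα)) hredγ h3

lemma main_aux (r : List (Atom A)) : ∀ (s : List (Atom A)),
    (∀ α ∈ r, α.Valid) → (∀ α ∈ s, α.Valid) → Reduced r → Reduced s →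
    Idl r = Idl s → r = s := by
  induction r with
  | nil =>
    intro s hr hs _ hrs h
    cases s with
    | nil => rfl
    | cons β Q =>
      exfalso
      obtain ⟨w, hw, hne⟩ := exists_ne_nil (hs β (by simp))
      have hmem : w ∈ Idl (β :: Q) := ⟨w, hw, [], nil_mem_idl Q, (List.append_nil w).symm⟩
      have : w ∈ Idl ([] : List (Atom A)) := h ▸ hmem
      exact hne this
  | cons α P ih =>
    intro s hr hs hrr hrs h
    cases s with
    | nil =>
      exfalso
      obtain ⟨w, hw, hne⟩ := exists_ne_nil (hr α (by simp))
      have hmem : w ∈ Idl (α :: P) := ⟨w, hw, [], nil_mem_idl P, (List.append_nil w).symm⟩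
      have : w ∈ Idl ([] : List (Atom A)) := h ▸ hmem
      exact hne this
    | cons β Q =>
      have hαv : α.Valid := hr α (by simp)
      have hβv : β.Valid := hs β (by simp)
      have h1 : α.lang ⊆ β.lang := by
        by_contra hc
        have hskip : Idl (α :: P) ⊆ Idl Q := skip_lemma hαv h.subset hc
        exact not_cons_subset Q β hs hrs (h.symm.subset.trans hskip)
      have h2 : β.lang ⊆ α.lang := by
        by_contra hc
        have hskip : Idl (β :: Q) ⊆ Idl P := skip_lemma hβv h.symm.subset hc
        exact not_cons_subset P α hr hrr (h.subset.trans hskip)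
      have hαβ : α = β := atom_eq_of_lang_eq hαv hβv (Set.Subset.antisymm h1 h2)
      subst hαβ
      have hPQ : Idl P ⊆ Idl Q := by
        cases P with
        | nil =>
          intro w hw
          have : w = [] := hw
          subst this
          exact nil_mem_idl Q
        | cons p₁ P' =>
          have hnab : ¬ Absorptive α p₁ := (List.isChain_cons_cons.mp hrr).1
          cases α with
          | single a => exact cancel_single h.subset
          | alph Δ => exact cancel_alph h.subset fun hL => hnab (Or.inl hL)
      have hQP : Idl Q ⊆ Idl P := by
        cases Q with
        | nil =>
          intro w hw
          have : w = [] := hw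
          subst this
          exact nil_mem_idl P
        | cons q₁ Q' =>
          have hnab : ¬ Absorptive α q₁ := (List.isChain_cons_cons.mp hrs).1
          cases α with
          | single a => exact cancel_single h.symm.subset
          | alph Δ => exact cancel_alph h.symm.subset fun hL => hnab (Or.inl hL)
      have : P = Q := ih Q (fun γ hγ => hr γ (List.mem_cons_of_mem _ hγ))
        (fun γ hγ => hs γ (List.mem_cons_of_mem _ hγ)) hrr.tail hrs.tail
        (Set.Subset.antisymm hPQ hQP)
      rw [this]

end Helpers

theorem reduced_rep_unique {A : Type*} (r s : List (Atom A))
    (hr : ∀ α ∈ r, α.Valid) (hs : ∀ α ∈ s, α.Valid)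
    (hrr : Reduced r) (hrs : Reduced s) :
    Idl r = Idl s ↔ r = s := by
  constructor
  · exact main_aux r s hr hs hrr hrs
  · rintro rfl; rfl
end
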